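/- Let G be a finite group. Then the number of group homomorphisms from ℤ × ℤ to G equals |G| times the number of conjugacy classes of G. -/

import Mathlib

/-!
A homomorphism `ℤ × ℤ → G` is the same as a commuting pair in `G`. Counting commuting pairs
`(a, b)` by their first entry gives `∑ₐ |C(a)|`, which by orbit–stabilizer for the conjugation
action is `|G|` times the number of conjugacy classes. For infinite `G` both sides are `0`,
the junk value of `Nat.card` on infinite types.
-/

namespace MonoidHom

variable {M N P : Type*} [Monoid M] [Monoid N] [Monoid P]

def prodEquivCommute :
    (M × N →* P) ≃ { fg : (M →* P) × (N →* P) // ∀ m n, Commute (fg.1 m) (fg.2 n) } where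
  toFun f := ⟨(f.comp (inl M N), f.comp (inr M N)), fun _ _ => (commute_inl_inr _ _).map f⟩
  invFun fg := fg.1.1.noncommCoprod fg.1.2 fg.2
  left_inv := noncommCoprod_unique
  right_inv fg := by ext <;> simp

end MonoidHom

theorem commute_zpowersHom_iff {G : Type*} [Group G] (a b : G) :
    (∀ m n, Commute (zpowersHom G a m) (zpowersHom G b n)) ↔ Commute a b :=
  ⟨fun h => by simpa using h (.ofAdd 1) (.ofAdd 1), fun h m n => h.zpow_zpow _ _⟩

def homMultiplicativeIntProdEquivCommute (G : Type*) [Group G] :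
    (Multiplicative (ℤ × ℤ) →* G) ≃ { p : G × G // Commute p.1 p.2 } :=
  ((MulEquiv.prodMultiplicative (G := ℤ) (H := ℤ)).monoidHomCongrLeftEquiv.trans
      MonoidHom.prodEquivCommute).trans <|
    ((zpowersHom G).prodCongr (zpowersHom G)).symm.subtypeEquiv fun fg => by
      obtain ⟨⟨a, b⟩, rfl⟩ := ((zpowersHom G).prodCongr (zpowersHom G)).surjective fg
      simpa using commute_zpowersHom_iff a b

theorem stmt_3_general {G : Type*} [Group G] :
    Nat.card (Multiplicative (ℤ × ℤ) →* G) =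
      Nat.card G * Nat.card (ConjClasses G) := by
  rw [Nat.card_congr (homMultiplicativeIntProdEquivCommute G),
    card_comm_eq_card_conjClasses_mul_card, mul_comm]

theorem stmt_3 {G : Type*} [Group G] [Finite G] :
    Nat.card (Multiplicative (ℤ × ℤ) →* G) =
      Nat.card G * Nat.card (ConjClasses G) :=
  stmt_3_general
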